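/- Let r > 1, let j be a nonnegative integer such that for all integers j' > j one has ∏_{k > j'} 1/(1 - p_k^{-r}) ≥ 1 + p_{j'}^{-r}, and let N_j be the set of positive integers having no prime factor ≤ p_j (with N_0 = ℕ⁺). Then the topological closure of σ_{-r}(N_j) equals the closed interval [1, ∏_{k > j} 1/(1 - p_k^{-r})]. -/

import Mathlib

noncomputable def sigma' (r : ℝ) (n : ℕ) : ℝ := ∑ d ∈ n.divisors, (d : ℝ) ^ (-r)

noncomputable def tailProd (r : ℝ) (j : ℕ) : ℝ :=
  ∏' i : ℕ, (1 - (Nat.nth Nat.Prime (j + i) : ℝ) ^ (-r))⁻¹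

/-- `Nset j` is the set of positive integers with no prime factor `≤ p_j`
(the primes `≤ p_j` being exactly `Nat.nth Nat.Prime k` for `k < j`); `Nset 0 = ℕ⁺`. -/
def Nset (j : ℕ) : Set ℕ := {n | 0 < n ∧ ∀ k < j, ¬ Nat.nth Nat.Prime k ∣ n}

/-!
Write `p_k = Nat.nth Nat.Prime k` (so `p_0 = 2`) and `T_K = tailProd r K`. Since `σ_{-r}` is
multiplicative and `σ_{-r}(p^e)` is a partial sum of the Euler factor `(1 - p^{-r})⁻¹`, induction
on `K` gives `σ_{-r}(n) T_K ≤ T_j` whenever every prime factor of `n` lies among `p_j, …, p_{K-1}`.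
Conversely, for `1 ≤ t < T_j` choose the exponents of `p_j, p_{j+1}, …` greedily, keeping
`σ_{-r}(n) ≤ t < σ_{-r}(n) T_K`; the hypothesis `1 + p_k^{-r} ≤ T_{k+1}` is exactly what makes
every step possible. As `T_K → 1`, the values `σ_{-r}(n)` converge to `t`.
-/

open Filter Topology Finset

section TailProduct

variable {r : ℝ}

noncomputable def eulerFactor (r : ℝ) (k : ℕ) : ℝ := (1 - (Nat.nth Nat.Prime k : ℝ) ^ (-r))⁻¹

lemma nth_prime_rpow_neg_pos (k : ℕ) : 0 < (Nat.nth Nat.Prime k : ℝ) ^ (-r) :=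
  Real.rpow_pos_of_pos (by exact_mod_cast (Nat.prime_nth_prime k).pos) _

lemma nth_prime_rpow_neg_lt_one (hr : 0 < r) (k : ℕ) : (Nat.nth Nat.Prime k : ℝ) ^ (-r) < 1 :=
  Real.rpow_lt_one_of_one_lt_of_neg (by exact_mod_cast (Nat.prime_nth_prime k).one_lt)
    (neg_lt_zero.mpr hr)

lemma summable_nth_prime_rpow_neg (hr : 1 < r) :
    Summable fun k ↦ (Nat.nth Nat.Prime k : ℝ) ^ (-r) :=
  (Real.summable_nat_rpow.mpr (by linarith)).comp_injective
    (Nat.nth_injective Nat.infinite_setOfPred_prime)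

lemma one_lt_eulerFactor (hr : 0 < r) (k : ℕ) : 1 < eulerFactor r k :=
  one_lt_inv_iff₀.mpr ⟨by linarith [nth_prime_rpow_neg_lt_one hr k],
    by linarith [nth_prime_rpow_neg_pos (r := r) k]⟩

lemma eulerFactor_pos (hr : 0 < r) (k : ℕ) : 0 < eulerFactor r k :=
  zero_lt_one.trans (one_lt_eulerFactor hr k)

lemma summable_log_eulerFactor (hr : 1 < r) : Summable fun k ↦ Real.log (eulerFactor r k) := by
  have := (Real.summable_log_one_add_of_summable (summable_nth_prime_rpow_neg hr).neg).neg
  simpa only [eulerFactor, Real.log_inv, sub_eq_add_neg] using this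

lemma summable_log_eulerFactor_add (hr : 1 < r) (j : ℕ) :
    Summable fun i ↦ Real.log (eulerFactor r (j + i)) :=
  (summable_log_eulerFactor hr).comp_injective (add_right_injective j)

lemma tailProd_eq_exp (hr : 1 < r) (j : ℕ) :
    tailProd r j = Real.exp (∑' i, Real.log (eulerFactor r (j + i))) :=
  (Real.rexp_tsum_eq_tprod (fun _ ↦ eulerFactor_pos (by linarith) _)
    (summable_log_eulerFactor_add hr j)).symm

lemma one_le_tailProd (hr : 1 < r) (j : ℕ) : 1 ≤ tailProd r j := by
  rw [tailProd_eq_exp hr]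
  exact Real.one_le_exp <| tsum_nonneg fun _ ↦
    Real.log_nonneg (one_lt_eulerFactor (by linarith) _).le

lemma tailProd_eq_eulerFactor_mul (hr : 1 < r) (j : ℕ) :
    tailProd r j = eulerFactor r j * tailProd r (j + 1) := by
  rw [tailProd_eq_exp hr, tailProd_eq_exp hr, (summable_log_eulerFactor_add hr j).tsum_eq_zero_add,
    Real.exp_add, add_zero, Real.exp_log (eulerFactor_pos (by linarith) j)]
  simp only [add_assoc, add_comm 1]

lemma one_lt_tailProd (hr : 1 < r) (j : ℕ) : 1 < tailProd r j := by
  rw [tailProd_eq_eulerFactor_mul hr]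
  exact one_lt_mul_of_lt_of_le (one_lt_eulerFactor (by linarith) j) (one_le_tailProd hr _)

lemma tendsto_tailProd_atTop (hr : 1 < r) : Tendsto (tailProd r) atTop (𝓝 1) := by
  have := (tendsto_sum_nat_add fun k ↦ Real.log (eulerFactor r k)).rexp
  rw [Real.exp_zero] at this
  refine this.congr fun j ↦ ?_
  simp only [tailProd_eq_exp hr, add_comm j]

end TailProduct

section Sigma

variable {r : ℝ}

lemma sigma'_one : sigma' r 1 = 1 := by simp [sigma']

lemma one_le_sigma' {n : ℕ} (hn : 0 < n) : 1 ≤ sigma' r n := by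
  simpa [sigma'] using single_le_sum (f := fun d : ℕ ↦ (d : ℝ) ^ (-r))
    (fun _ _ ↦ by positivity) (Nat.one_mem_divisors.mpr hn.ne')

lemma sigma'_mul {m n : ℕ} (h : m.Coprime n) : sigma' r (m * n) = sigma' r m * sigma' r n := by
  rw [sigma', Nat.divisors_mul, mul_def, sum_image h.mul_injOn_divisors, sum_product, sigma',
    sigma', sum_mul_sum]
  refine sum_congr rfl fun a _ ↦ sum_congr rfl fun b _ ↦ ?_
  push_cast
  exact Real.mul_rpow (Nat.cast_nonneg a) (Nat.cast_nonneg b)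

lemma sigma'_prime_pow {p : ℕ} (hp : p.Prime) (e : ℕ) :
    sigma' r (p ^ e) = ∑ i ∈ range (e + 1), ((p : ℝ) ^ (-r)) ^ i := by
  rw [sigma', Nat.sum_divisors_prime_pow hp]
  refine sum_congr rfl fun i _ ↦ ?_
  push_cast
  rw [← Real.rpow_natCast, ← Real.rpow_natCast, ← Real.rpow_mul (Nat.cast_nonneg p),
    ← Real.rpow_mul (Nat.cast_nonneg p), mul_comm]

lemma sigma'_nth_prime_pow_le_eulerFactor (hr : 0 < r) (k e : ℕ) :
    sigma' r (Nat.nth Nat.Prime k ^ e) ≤ eulerFactor r k := by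
  rw [sigma'_prime_pow (Nat.prime_nth_prime k)]
  exact sum_le_hasSum _ (fun _ _ ↦ by positivity) (hasSum_geometric_of_lt_one
    (nth_prime_rpow_neg_pos k).le (nth_prime_rpow_neg_lt_one hr k))

end Sigma

def NsetIco (j K : ℕ) : Set ℕ := {n | 0 < n ∧ ∀ k, Nat.nth Nat.Prime k ∣ n → k ∈ Set.Ico j K}

section NsetIco

variable {j K n : ℕ}

lemma nth_prime_dvd_nth_prime_pow {k e : ℕ} (h : Nat.nth Nat.Prime k ∣ Nat.nth Nat.Prime K ^ e) :
    k = K :=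
  Nat.nth_injective Nat.infinite_setOfPred_prime <|
    (Nat.prime_dvd_prime_iff_eq (Nat.prime_nth_prime k) (Nat.prime_nth_prime K)).mp
      ((Nat.prime_nth_prime k).dvd_of_dvd_pow h)

lemma one_mem_NsetIco : 1 ∈ NsetIco j K :=
  ⟨one_pos, fun k hk ↦ absurd (Nat.eq_one_of_dvd_one hk) (Nat.prime_nth_prime k).ne_one⟩

lemma NsetIco_subset_Nset : NsetIco j K ⊆ Nset j :=
  fun _ hn ↦ ⟨hn.1, fun k hk hdvd ↦ hk.not_ge (hn.2 k hdvd).1⟩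

lemma exists_mem_NsetIco (hn : n ∈ Nset j) : ∃ K, j ≤ K ∧ n ∈ NsetIco j K := by
  refine ⟨j + n, by omega, hn.1, fun k hdvd ↦ ⟨not_lt.mp fun hk ↦ hn.2 k hk hdvd, ?_⟩⟩
  linarith [Nat.add_two_le_nth_prime k, Nat.le_of_dvd hn.1 hdvd]

lemma eq_one_of_mem_NsetIco_self (hn : n ∈ NsetIco j j) : n = 1 :=
  Nat.eq_one_iff_not_exists_prime_dvd.mpr fun q hq hdvd ↦ by
    have := hn.2 _ ((Nat.nth_count hq).symm ▸ hdvd)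
    exact (Set.Ico_self j ▸ this).elim

lemma coprime_nth_prime_pow_of_mem_NsetIco (hn : n ∈ NsetIco j K) (e : ℕ) :
    n.Coprime (Nat.nth Nat.Prime K ^ e) :=
  ((Nat.prime_nth_prime K).coprime_iff_not_dvd.mpr fun h ↦ (hn.2 K h).2.false).symm.pow_right e

lemma mul_nth_prime_pow_mem_NsetIco (hn : n ∈ NsetIco j K) (hjK : j ≤ K) (e : ℕ) :
    n * Nat.nth Nat.Prime K ^ e ∈ NsetIco j (K + 1) := by
  refine ⟨Nat.mul_pos hn.1 (pow_pos (Nat.prime_nth_prime K).pos e), fun k hdvd ↦ ?_⟩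
  rcases (Nat.prime_nth_prime k).dvd_mul.mp hdvd with hk | hk
  · exact ⟨(hn.2 k hk).1, (hn.2 k hk).2.trans K.lt_add_one⟩
  · obtain rfl := nth_prime_dvd_nth_prime_pow hk
    exact ⟨hjK, Nat.lt_add_one _⟩

lemma ordCompl_mem_NsetIco (hn : n ∈ NsetIco j (K + 1)) :
    ordCompl[Nat.nth Nat.Prime K] n ∈ NsetIco j K := by
  refine ⟨Nat.ordCompl_pos _ hn.1.ne', fun k hdvd ↦ ?_⟩
  have hk := hn.2 k (hdvd.trans (Nat.ordCompl_dvd n _))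
  have hkK : k ≠ K := by
    rintro rfl
    exact Nat.not_dvd_ordCompl (Nat.prime_nth_prime k) hn.1.ne' hdvd
  exact ⟨hk.1, by have := hk.2; omega⟩

end NsetIco

section UpperBound

variable {r : ℝ}

lemma sigma'_mul_tailProd_le (hr : 1 < r) {j K n : ℕ} (hjK : j ≤ K) (hn : n ∈ NsetIco j K) :
    sigma' r n * tailProd r K ≤ tailProd r j := by
  induction K, hjK using Nat.le_induction generalizing n with
  | base => rw [eq_one_of_mem_NsetIco_self hn, sigma'_one, one_mul]
  | succ K hjK ih =>
    set p := Nat.nth Nat.Prime K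
    set m := ordCompl[p] n
    have hm : m ∈ NsetIco j K := ordCompl_mem_NsetIco hn
    have hsplit : sigma' r n = sigma' r m * sigma' r (p ^ n.factorization p) := by
      rw [← sigma'_mul (coprime_nth_prime_pow_of_mem_NsetIco hm _), mul_comm,
        Nat.ordProj_mul_ordCompl_eq_self]
    calc sigma' r n * tailProd r (K + 1)
        = sigma' r m * (sigma' r (p ^ n.factorization p) * tailProd r (K + 1)) := by
          rw [hsplit, mul_assoc]
      _ ≤ sigma' r m * (eulerFactor r K * tailProd r (K + 1)) := by
          gcongr
          · exact zero_le_one.trans (one_le_sigma' hm.1)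
          · exact zero_le_one.trans (one_le_tailProd hr _)
          · exact sigma'_nth_prime_pow_le_eulerFactor (by linarith) K _
      _ = sigma' r m * tailProd r K := by rw [tailProd_eq_eulerFactor_mul hr K]
      _ ≤ tailProd r j := ih hm

lemma sigma'_le_tailProd (hr : 1 < r) {j n : ℕ} (hn : n ∈ Nset j) : sigma' r n ≤ tailProd r j := by
  obtain ⟨K, hjK, hnK⟩ := exists_mem_NsetIco hn
  calc sigma' r n ≤ sigma' r n * tailProd r K :=
        le_mul_of_one_le_right (zero_le_one.trans (one_le_sigma' hn.1)) (one_le_tailProd hr K)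
    _ ≤ tailProd r j := sigma'_mul_tailProd_le hr hjK hnK

end UpperBound

section Density

lemma exists_geom_sum_le_lt_mul {q T u : ℝ} (hq0 : 0 ≤ q) (hq1 : q < 1) (hT : 1 + q ≤ T)
    (hu1 : 1 ≤ u) (hu : u < (1 - q)⁻¹ * T) :
    ∃ e, ∑ i ∈ range (e + 1), q ^ i ≤ u ∧ u < (∑ i ∈ range (e + 1), q ^ i) * T := by
  have hlim : Tendsto (fun e ↦ (∑ i ∈ range (e + 1), q ^ i) * T) atTop (𝓝 ((1 - q)⁻¹ * T)) :=
    (((hasSum_geometric_of_lt_one hq0 hq1).tendsto_sum_nat).comp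
      (tendsto_add_atTop_nat 1)).mul_const T
  have hex : ∃ e, u < (∑ i ∈ range (e + 1), q ^ i) * T := (hlim.eventually_const_lt hu).exists
  classical
  refine ⟨Nat.find hex, ?_, Nat.find_spec hex⟩
  -- Take the least admissible `e`: one more geometric term costs at most a factor `1 + q ≤ T`.
  rcases h : Nat.find hex with _ | e
  · simpa using hu1
  · have hmin : (∑ i ∈ range (e + 1), q ^ i) * T ≤ u :=
      not_lt.mp (Nat.find_min hex (by omega))
    have hS : 1 ≤ ∑ i ∈ range (e + 1), q ^ i := by
      rw [sum_range_succ', pow_zero]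
      exact le_add_of_nonneg_left (sum_nonneg fun i _ ↦ by positivity)
    calc ∑ i ∈ range (e + 1 + 1), q ^ i = q * ∑ i ∈ range (e + 1), q ^ i + 1 := geom_sum_succ
      _ ≤ (∑ i ∈ range (e + 1), q ^ i) * (1 + q) := by nlinarith
      _ ≤ (∑ i ∈ range (e + 1), q ^ i) * T := by gcongr
      _ ≤ u := hmin

variable {r : ℝ} {j : ℕ}

lemma exists_mem_NsetIco_sigma'_le_lt (hr : 1 < r)
    (hstep : ∀ k ≥ j, 1 + (Nat.nth Nat.Prime k : ℝ) ^ (-r) ≤ tailProd r (k + 1))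
    {t : ℝ} (ht1 : 1 ≤ t) (htT : t < tailProd r j) {K : ℕ} (hjK : j ≤ K) :
    ∃ n ∈ NsetIco j K, sigma' r n ≤ t ∧ t < sigma' r n * tailProd r K := by
  induction K, hjK using Nat.le_induction with
  | base => exact ⟨1, one_mem_NsetIco, by rwa [sigma'_one], by rwa [sigma'_one, one_mul]⟩
  | succ K hjK ih =>
    obtain ⟨n, hn, hle, hlt⟩ := ih
    have hσ : 0 < sigma' r n := zero_lt_one.trans_le (one_le_sigma' hn.1)
    obtain ⟨e, he_le, he_lt⟩ := exists_geom_sum_le_lt_mul (u := t / sigma' r n)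
      (nth_prime_rpow_neg_pos K).le (nth_prime_rpow_neg_lt_one (by linarith) K) (hstep K hjK)
      ((one_le_div hσ).mpr hle)
      (((div_lt_iff₀' hσ).mpr hlt).trans_eq (tailProd_eq_eulerFactor_mul hr K))
    refine ⟨n * Nat.nth Nat.Prime K ^ e, mul_nth_prime_pow_mem_NsetIco hn hjK e, ?_, ?_⟩ <;>
      rw [sigma'_mul (coprime_nth_prime_pow_of_mem_NsetIco hn e),
        sigma'_prime_pow (Nat.prime_nth_prime K)]
    · exact (le_div_iff₀' hσ).mp he_le
    · rw [mul_assoc]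
      exact (div_lt_iff₀' hσ).mp he_lt

lemma Ico_subset_closure_sigma'_image (hr : 1 < r)
    (hstep : ∀ k ≥ j, 1 + (Nat.nth Nat.Prime k : ℝ) ^ (-r) ≤ tailProd r (k + 1)) :
    Set.Ico 1 (tailProd r j) ⊆ closure (sigma' r '' Nset j) := by
  rintro t ⟨ht1, htT⟩
  choose! n hn hle hlt using fun K (hK : j ≤ K) ↦
    exists_mem_NsetIco_sigma'_le_lt hr hstep ht1 htT hK
  have hlower : Tendsto (fun K ↦ t / tailProd r K) atTop (𝓝 t) := by
    have := (tendsto_const_nhds (x := t)).div (tendsto_tailProd_atTop hr) one_ne_zero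
    rwa [div_one] at this
  refine mem_closure_of_tendsto (f := fun K ↦ sigma' r (n K)) (b := atTop) ?_ ?_
  · refine tendsto_of_tendsto_of_tendsto_of_le_of_le' hlower tendsto_const_nhds ?_ ?_ <;>
      filter_upwards [eventually_ge_atTop j] with K hK
    · exact (div_le_iff₀ (zero_lt_one.trans_le (one_le_tailProd hr K))).mpr (hlt K hK).le
    · exact hle K hK
  · filter_upwards [eventually_ge_atTop j] with K hK
    exact ⟨n K, NsetIco_subset_Nset (hn K hK), rfl⟩

end Density

theorem stmt10 (r : ℝ) (hr : 1 < r) (j : ℕ)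
    (h : ∀ j' > j, 1 + (Nat.nth Nat.Prime (j' - 1) : ℝ) ^ (-r) ≤ tailProd r j') :
    closure (sigma' r '' Nset j) = Set.Icc 1 (tailProd r j) := by
  have hstep : ∀ k ≥ j, 1 + (Nat.nth Nat.Prime k : ℝ) ^ (-r) ≤ tailProd r (k + 1) :=
    fun k hk ↦ by simpa using h (k + 1) (by omega)
  refine (closure_minimal ?_ isClosed_Icc).antisymm ?_
  · rintro _ ⟨n, hn, rfl⟩
    exact ⟨one_le_sigma' hn.1, sigma'_le_tailProd hr hn⟩
  · rw [← closure_Ico (one_lt_tailProd hr j).ne]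
    exact closure_minimal (Ico_subset_closure_sigma'_image hr hstep) isClosed_closure
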